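/- For a completely regular Hausdorff space X, the following are equivalent: (a) X is an almost P-space; (b) for every x ∈ X, the maximal ideal M_x = {f ∈ C(X) : f(x) = 0} is an ℵ₀-z°-ideal; (c) every M_x is a countable strongly annihilated ideal of C(X). -/

import Mathlib

/-!
(c) ⇒ (b) holds in any reduced ring: if `c` annihilates `S` but `c * g ≠ 0`, a minimal prime
avoiding `c * g` contains `S` but not `g`.

(b) ⇒ (a): applied to `S = {f}` and `g = 1`, (b) produces a minimal prime containing `f`.
Elements of minimal primes are zero divisors, and `s * f = 0` with `s ≠ 0` puts the nonempty
open set `{s ≠ 0}` inside the zero set of `f`.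

(a) ⇒ (c): `S` together with `g - g x` is a countable family, so its common zero set is the zero
set of a single `G` (a weighted series), and it contains `x`. A bump function `c` at a point `y`
of its interior, vanishing off the interior, kills `S`, while `(c * g) y = g x ≠ 0`.
-/

open ContinuousMap

/-- An ideal `I` is countable strongly annihilated if for each countable subset `S ⊆ I`
and each `b ∉ I` there exists `c` with `c * a = 0` for all `a ∈ S` but `c * b ≠ 0`. -/
def CountableStronglyAnnihilated {R : Type*} [CommRing R] (I : Ideal R) : Prop :=
  ∀ S : Set R, S.Countable → S ⊆ I → ∀ b ∉ I, ∃ c : R, (∀ a ∈ S, c * a = 0) ∧ c * b ≠ 0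

/-- The fixed maximal ideal `M_x = {f ∈ C(X) : f x = 0}`. -/
def Mx {X : Type*} [TopologicalSpace X] (x : X) : Ideal C(X, ℝ) where
  carrier := {f | f x = 0}
  zero_mem' := rfl
  add_mem' := by
    intro f g hf hg
    simp only [Set.mem_setOf_eq, ContinuousMap.add_apply] at *
    rw [hf, hg, add_zero]
  smul_mem' := by
    intro c f hf
    simp only [Set.mem_setOf_eq] at *
    simp [hf]

/-- The ℵ₀-z°-ideals of the paper. -/
def IsAleph0ZIdeal {R : Type*} [CommRing R] (I : Ideal R) : Prop :=
  ∀ S : Set R, S.Countable → S ⊆ I → ∀ g : R, (∀ P ∈ minimalPrimes R, S ⊆ ↑P → g ∈ P) → g ∈ I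

def IsAlmostPSpace (X : Type*) [TopologicalSpace X] : Prop :=
  ∀ f : C(X, ℝ), {x | f x = 0}.Nonempty → (interior {x | f x = 0}).Nonempty

section CommRing

variable {R : Type*} [CommRing R] [IsReduced R]

theorem exists_mem_minimalPrimes_subset_notMem_of_mul_eq_zero {S : Set R} {c g : R}
    (hS : ∀ a ∈ S, c * a = 0) (hcg : c * g ≠ 0) : ∃ P ∈ minimalPrimes R, S ⊆ P ∧ g ∉ P := by
  have hcg_nil : c * g ∉ (⊥ : Ideal R).radical := fun ⟨n, hn⟩ ↦
    hcg (IsNilpotent.eq_zero ⟨n, Ideal.mem_bot.mp hn⟩)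
  obtain ⟨P, hP, hcgP⟩ : ∃ P ∈ minimalPrimes R, c * g ∉ P := by
    simpa [← Ideal.sInf_minimalPrimes] using hcg_nil
  have hc : c ∉ P := fun h ↦ hcgP (P.mul_mem_right g h)
  refine ⟨P, hP, fun a ha ↦ ?_, fun h ↦ hcgP (P.mul_mem_left c h)⟩
  exact (hP.isPrime.mem_or_mem (by simp [hS a ha])).resolve_left hc

theorem CountableStronglyAnnihilated.isAleph0ZIdeal {I : Ideal R}
    (hI : CountableStronglyAnnihilated I) : IsAleph0ZIdeal I := by
  intro S hS hSI g hg
  by_contra hgI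
  obtain ⟨c, hcS, hcg⟩ := hI S hS hSI g hgI
  obtain ⟨P, hP, hSP, hgP⟩ := exists_mem_minimalPrimes_subset_notMem_of_mul_eq_zero hcS hcg
  exact hgP (hg P hP hSP)

end CommRing

namespace ContinuousMap

variable {X : Type*} [TopologicalSpace X]

instance instIsReduced {R : Type*} [TopologicalSpace R] [MonoidWithZero R] [ContinuousMul R]
    [IsReduced R] : IsReduced C(X, R) where
  eq_zero f := fun ⟨n, hn⟩ ↦ ext fun x ↦ IsNilpotent.eq_zero ⟨n, by simpa using congr($hn x)⟩

theorem interior_zeroSet_nonempty_of_mem_minimalPrimes {P : Ideal C(X, ℝ)}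
    (hP : P ∈ minimalPrimes C(X, ℝ)) {f : C(X, ℝ)} (hf : f ∈ P) :
    (interior {x | f x = 0}).Nonempty := by
  obtain ⟨s, hs, hfs⟩ := Ideal.exists_mul_mem_of_mem_minimalPrimes hP hf
  rw [Ideal.mem_bot] at hs hfs
  obtain ⟨z, hz⟩ : ∃ z, s z ≠ 0 := by simpa [ContinuousMap.ext_iff] using hs
  have hcoz : {w | s w ≠ 0} ⊆ {w | f w = 0} := fun w hw ↦
    (mul_eq_zero.mp congr($hfs w)).resolve_right hw
  exact ⟨z, interior_maximal hcoz (isOpen_ne_fun s.continuous continuous_const) hz⟩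

theorem isAlmostPSpace_of_forall_isAleph0ZIdeal (h : ∀ x : X, IsAleph0ZIdeal (Mx x)) :
    IsAlmostPSpace X := by
  rintro f ⟨x, hx⟩
  by_contra hint
  have hPf : ∀ P ∈ minimalPrimes C(X, ℝ), {f} ⊆ (P : Set C(X, ℝ)) → (1 : C(X, ℝ)) ∈ P :=
    fun P hP hfP ↦ absurd (interior_zeroSet_nonempty_of_mem_minimalPrimes hP (hfP rfl)) hint
  exact one_ne_zero (h x {f} (Set.countable_singleton f) (Set.singleton_subset_iff.mpr hx) 1 hPf)

theorem exists_zeroSet_eq_iInter (u : ℕ → C(X, ℝ)) :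
    ∃ G : C(X, ℝ), {z | G z = 0} = ⋂ n, {z | u n z = 0} := by
  set φ : ℕ → X → ℝ := fun n z ↦ (1 / 2 : ℝ) ^ n * min |u n z| 1
  have hφ_nonneg : ∀ n z, 0 ≤ φ n z := fun n z ↦ by positivity
  have hφ_le : ∀ n z, ‖φ n z‖ ≤ (1 / 2 : ℝ) ^ n := fun n z ↦ by
    rw [Real.norm_of_nonneg (hφ_nonneg n z)]
    exact mul_le_of_le_one_right (by positivity) (min_le_right _ _)
  have hφ_summable : ∀ z, Summable (φ · z) := fun z ↦
    summable_geometric_two.of_norm_bounded (hφ_le · z)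
  refine ⟨⟨fun z ↦ ∑' n, φ n z, continuous_tsum (fun n ↦ ?_) summable_geometric_two hφ_le⟩, ?_⟩
  · exact continuous_const.mul ((u n).continuous.abs.min continuous_const)
  ext z
  simp only [coe_mk, Set.mem_ofPred_eq, Set.mem_iInter]
  constructor
  · intro hz n
    have hφn : φ n z = 0 := le_antisymm
      (hz ▸ (hφ_summable z).le_tsum n fun m _ ↦ hφ_nonneg m z) (hφ_nonneg n z)
    rcases min_eq_iff.mp (by simpa [φ] using hφn) with ⟨habs, -⟩ | ⟨h1, -⟩
    · exact abs_eq_zero.mp habs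
    · exact absurd h1 one_ne_zero
  · intro hz
    simp [φ, hz]

theorem exists_eq_one_eqOn_zero_compl [CompletelyRegularSpace X] {U : Set X} (hU : IsOpen U)
    {y : X} (hy : y ∈ U) : ∃ c : C(X, ℝ), c y = 1 ∧ Set.EqOn c 0 Uᶜ := by
  obtain ⟨f, hf, hfy, hfU⟩ := CompletelyRegularSpace.completely_regular_isOpen y U hU hy
  refine ⟨⟨fun z ↦ 1 - f z, by fun_prop⟩, by simp [hfy], fun z hz ↦ ?_⟩
  simp [hfU hz]

theorem countableStronglyAnnihilated_Mx [CompletelyRegularSpace X] (hX : IsAlmostPSpace X)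
    (x : X) : CountableStronglyAnnihilated (Mx x) := by
  intro S hS hSx g hgx
  set h : C(X, ℝ) := g - const X (g x)
  obtain ⟨u, hu⟩ := (hS.insert h).exists_eq_range (Set.insert_nonempty h S)
  obtain ⟨G, hG⟩ := exists_zeroSet_eq_iInter u
  have hzero : ∀ z ∈ {z | G z = 0}, ∀ a ∈ insert h S, a z = 0 := by
    rw [hG, hu]
    rintro z hz _ ⟨n, rfl⟩
    exact Set.mem_iInter.mp hz n
  have hGx : x ∈ {z | G z = 0} := by
    rw [hG, Set.mem_iInter]
    intro n
    rcases (hu ▸ Set.mem_range_self n : u n ∈ insert h S) with hn | ha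
    · simp [hn, h]
    · exact hSx ha
  obtain ⟨y, hy⟩ := hX G ⟨x, hGx⟩
  obtain ⟨c, hcy, hc⟩ := exists_eq_one_eqOn_zero_compl isOpen_interior hy
  refine ⟨c, fun a ha ↦ ext fun z ↦ ?_, fun hcg ↦ hgx ?_⟩
  · by_cases hz : z ∈ interior {z | G z = 0}
    · simp [hzero z (interior_subset hz) a (Set.mem_insert_of_mem h ha)]
    · simp [hc hz]
  · show g x = 0
    have hgy : g y = g x := sub_eq_zero.mp (hzero y (interior_subset hy) h (Set.mem_insert h S))
    simpa [hcy, hgy] using congr($hcg y)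

end ContinuousMap

theorem stmt18_general {X : Type*} [TopologicalSpace X] [CompletelyRegularSpace X] :
    ((∀ f : C(X, ℝ), {x | f x = 0}.Nonempty → (interior {x | f x = 0}).Nonempty) ↔
      (∀ x : X, ∀ S : Set C(X, ℝ), S.Countable → S ⊆ Mx x → ∀ g : C(X, ℝ),
        (∀ P ∈ minimalPrimes C(X, ℝ), S ⊆ ↑P → g ∈ P) → g ∈ Mx x)) ∧
    ((∀ x : X, ∀ S : Set C(X, ℝ), S.Countable → S ⊆ Mx x → ∀ g : C(X, ℝ),
        (∀ P ∈ minimalPrimes C(X, ℝ), S ⊆ ↑P → g ∈ P) → g ∈ Mx x) ↔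
      (∀ x : X, CountableStronglyAnnihilated (Mx x))) := by
  have hAC : IsAlmostPSpace X → ∀ x : X, CountableStronglyAnnihilated (Mx x) :=
    fun hX ↦ countableStronglyAnnihilated_Mx hX
  have hCB : (∀ x : X, CountableStronglyAnnihilated (Mx x)) → ∀ x : X, IsAleph0ZIdeal (Mx x) :=
    fun h x ↦ (h x).isAleph0ZIdeal
  have hBA : (∀ x : X, IsAleph0ZIdeal (Mx x)) → IsAlmostPSpace X :=
    isAlmostPSpace_of_forall_isAleph0ZIdeal
  exact ⟨⟨hCB ∘ hAC, hBA⟩, ⟨hAC ∘ hBA, hCB⟩⟩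

/-- `X` is an almost P-space iff every `M_x` is an `ℵ₀-z°`-ideal iff every `M_x` is a
countable strongly annihilated ideal of `C(X)`. -/
theorem stmt18 {X : Type*} [TopologicalSpace X] [T2Space X] [CompletelyRegularSpace X] :
    ((∀ f : C(X, ℝ), {x | f x = 0}.Nonempty → (interior {x | f x = 0}).Nonempty) ↔
      (∀ x : X, ∀ S : Set C(X, ℝ), S.Countable → S ⊆ Mx x → ∀ g : C(X, ℝ),
        (∀ P ∈ minimalPrimes C(X, ℝ), S ⊆ ↑P → g ∈ P) → g ∈ Mx x)) ∧
    ((∀ x : X, ∀ S : Set C(X, ℝ), S.Countable → S ⊆ Mx x → ∀ g : C(X, ℝ),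
        (∀ P ∈ minimalPrimes C(X, ℝ), S ⊆ ↑P → g ∈ P) → g ∈ Mx x) ↔
      (∀ x : X, CountableStronglyAnnihilated (Mx x))) :=
  stmt18_general
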